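/- Let m be a positive integer with gcd(m,q) = 1, let C = F_q[x]·c(x) be the 1-generator QC code of index l generated by c(x) = (c_1(x),...,c_l(x)) ∈ (F_q[x]/(x^m−1))^l, let ξ be a primitive m-th root of unity in an algebraic closure of F_q, and set S_j = {i ∈ Z_m : c_j(ξ^i) ≠ 0} for j ∈ {1,...,l}. If S_i ∩ S_j = ∅ for all 1 ≤ i < j ≤ l, then C is μ_{−1}-LCD. -/

import Mathlib

open scoped BigOperators
open Polynomial

/-- The Euclidean dual of a linear code inside `(F[x]/(x^m - 1))^l`, each factor being
identified with `F^m` (coordinates indexed by `ZMod m`) via coefficient vectors. -/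
def qcDual {F : Type*} [Field F] {l m : ℕ} [NeZero m]
    (C : Submodule F (Fin l → ZMod m → F)) : Submodule F (Fin l → ZMod m → F) where
  carrier := {b | ∀ c ∈ C, ∑ j, ∑ i, b j i * c j i = 0}
  zero_mem' := by intro c hc; simp
  add_mem' := by
    intro x y hx hy c hc
    simp only [Set.mem_setOf_eq, Pi.add_apply, add_mul, Finset.sum_add_distrib,
      hx c hc, hy c hc, add_zero]
  smul_mem' := by
    intro r x hx c hc
    simp only [Set.mem_setOf_eq, Pi.smul_apply, smul_eq_mul, mul_assoc,
      ← Finset.mul_sum, hx c hc, mul_zero]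

/-- The coordinate permutation `μ_a` of `(F[x]/(x^m - 1))^l`, sending each component
`c_j(x)` to `c_j(x^a) mod (x^m - 1)`; on coefficient vectors the coefficient of `x^i`
of the image of `c_j` is the coefficient of `x^(a⁻¹ i)` of `c_j`. -/
def muQC {F : Type*} [Field F] (l m : ℕ) (a : ℤ) :
    (Fin l → ZMod m → F) →ₗ[F] (Fin l → ZMod m → F) where
  toFun c := fun j i => c j (((a : ZMod m))⁻¹ * i)
  map_add' := fun _ _ => rfl
  map_smul' := fun _ _ => rfl

/-- The coefficient vector (indexed by `ZMod m`) of a polynomial of degree `< m`,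
identifying `F[x]/(x^m - 1)` with `F^m`. -/
def polyToVec {F : Type*} [Field F] (m : ℕ) [NeZero m] (p : Polynomial F) : ZMod m → F :=
  fun i => p.coeff i.val

/-- The 1-generator quasi-cyclic code of index `l` generated by
`c = (c_1(x), …, c_l(x)) ∈ (F[x]/(x^m - 1))^l`. -/
def oneGenQC {F : Type*} [Field F] (m l : ℕ) [NeZero m] (c : Fin l → Polynomial F) :
    Submodule F (Fin l → ZMod m → F) :=
  Submodule.span F
    {v | ∃ p : Polynomial F, v = fun j => polyToVec m ((p * c j) % (X ^ m - 1))}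

/-! Let `v = p·c` lie in `C` and be orthogonal to `μ_{-1}(C)`. Since `∑ᵢ aᵢ b₋ᵢ` is the constant
coefficient of `a b` modulo `x^m - 1`, pairing `v` with `μ_{-1}(x^k c)` reads off a coefficient of
`p ∑_j c_j²`, so `x^m - 1 ∣ p ∑_j c_j²`. At each root `ξ^i` of `x^m - 1` the disjointness of the
supports leaves the single term `p(ξ^i) c_j(ξ^i)²`, so `p(ξ^i) c_j(ξ^i) = 0`; as the `ξ^i` are
distinct, `x^m - 1 ∣ p c_j` for every `j`, i.e. `v = 0`. -/

namespace Polynomial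

section CyclicCoeffs

variable {R : Type*} [CommRing R] {m : ℕ}

noncomputable def cyclicCoeffs (R : Type*) [CommRing R] (m : ℕ) : R[X] →ₗ[R] (ZMod m → R) :=
  LinearMap.pi fun i : ZMod m => (lcoeff R i.val).comp (modByMonicHom (X ^ m - 1))

theorem cyclicCoeffs_apply (P : R[X]) (i : ZMod m) :
    cyclicCoeffs R m P i = (P %ₘ (X ^ m - 1)).coeff i.val := rfl

variable [NeZero m]

theorem monic_X_pow_sub_one : (X ^ m - 1 : R[X]).Monic := by
  simpa using monic_X_pow_sub_C (1 : R) (NeZero.ne m)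

theorem degree_X_pow_sub_one [Nontrivial R] : (X ^ m - 1 : R[X]).degree = m := by
  simpa using degree_X_pow_sub_C (R := R) (Nat.pos_of_ne_zero (NeZero.ne m)) 1

theorem X_pow_modByMonic_X_pow_sub_one (n : ℕ) :
    (X ^ n : R[X]) %ₘ (X ^ m - 1) = X ^ (n % m) := by
  nontriviality R
  have hdvd : (X ^ m - 1 : R[X]) ∣ X ^ n - X ^ (n % m) := by
    have h : (X ^ m - 1 : R[X]) ∣ (X ^ m) ^ (n / m) - 1 := by
      simpa using sub_dvd_pow_sub_pow (X ^ m : R[X]) 1 (n / m)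
    convert h.mul_left (X ^ (n % m)) using 1
    rw [mul_sub, mul_one, ← pow_mul, ← pow_add, Nat.mod_add_div]
  rw [← modByMonic_eq_zero_iff_dvd monic_X_pow_sub_one, sub_modByMonic, sub_eq_zero] at hdvd
  rw [hdvd, modByMonic_eq_self_iff monic_X_pow_sub_one, degree_X_pow, degree_X_pow_sub_one]
  exact_mod_cast Nat.mod_lt n (Nat.pos_of_ne_zero (NeZero.ne m))

theorem cyclicCoeffs_monomial (n : ℕ) (a : R) :
    cyclicCoeffs R m (monomial n a) = Pi.single (n : ZMod m) a := by
  ext i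
  rw [cyclicCoeffs_apply, ← smul_X_eq_monomial, smul_modByMonic, X_pow_modByMonic_X_pow_sub_one,
    coeff_smul, coeff_X_pow, Pi.single_apply]
  have hval : i.val = n % m ↔ i = n := by
    rw [← ZMod.val_natCast, (ZMod.val_injective m).eq_iff]
  simp only [hval, smul_eq_mul, mul_ite, mul_one, mul_zero]

theorem sum_cyclicCoeffs_mul_neg (A B : R[X]) :
    ∑ i, cyclicCoeffs R m A i * cyclicCoeffs R m B (-i) = cyclicCoeffs R m (A * B) 0 := by
  induction A using Polynomial.induction_on' with
  | add p q hp hq => simp only [map_add, add_mul, Pi.add_apply, Finset.sum_add_distrib, hp, hq]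
  | monomial n a =>
  induction B using Polynomial.induction_on' with
  | add p q hp hq => simp only [map_add, mul_add, Pi.add_apply, Finset.sum_add_distrib, hp, hq]
  | monomial k b =>
  rw [monomial_mul_monomial, cyclicCoeffs_monomial, cyclicCoeffs_monomial, cyclicCoeffs_monomial,
    Finset.sum_eq_single (n : ZMod m) (fun i _ hi => by rw [Pi.single_eq_of_ne hi, zero_mul])
      (by simp)]
  simp only [Pi.single_eq_same, Pi.single_apply, neg_eq_iff_add_eq_zero, Nat.cast_add,
    eq_comm (a := (0 : ZMod m)), mul_ite, mul_zero]

theorem cyclicCoeffs_mul_X_pow_zero (A : R[X]) (k : ℕ) :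
    cyclicCoeffs R m (A * X ^ k) 0 = cyclicCoeffs R m A (-k) := by
  rw [← sum_cyclicCoeffs_mul_neg, X_pow_eq_monomial, cyclicCoeffs_monomial,
    Finset.sum_eq_single (-(k : ZMod m))]
  · simp
  · intro i _ hi
    rw [Pi.single_eq_of_ne fun h => hi (by rw [← h, neg_neg]), mul_zero]
  · simp

theorem cyclicCoeffs_eq_zero_iff {P : R[X]} : cyclicCoeffs R m P = 0 ↔ (X ^ m - 1 : R[X]) ∣ P := by
  nontriviality R
  rw [← modByMonic_eq_zero_iff_dvd monic_X_pow_sub_one, funext_iff]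
  refine ⟨fun h => ext fun n => ?_, fun h i => by simp [cyclicCoeffs_apply, h]⟩
  rw [coeff_zero]
  by_cases hn : n < m
  · simpa [cyclicCoeffs_apply, ZMod.val_natCast_of_lt hn] using h n
  · refine coeff_eq_zero_of_degree_lt ((degree_modByMonic_lt _ monic_X_pow_sub_one).trans_le ?_)
    rw [degree_X_pow_sub_one]
    exact_mod_cast not_lt.1 hn

theorem X_pow_sub_one_dvd_of_cyclicCoeffs_mul_X_pow {P : R[X]}
    (h : ∀ k : ℕ, cyclicCoeffs R m (P * X ^ k) 0 = 0) : (X ^ m - 1 : R[X]) ∣ P := by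
  refine cyclicCoeffs_eq_zero_iff.1 ?_
  ext i
  simpa [cyclicCoeffs_mul_X_pow_zero] using h (-i).val

end CyclicCoeffs

section RootsOfUnity

variable {F K : Type*} [Field F] [Field K] [Algebra F K]

theorem aeval_eq_zero_of_X_pow_sub_one_dvd {m : ℕ} {P : F[X]} (h : (X ^ m - 1 : F[X]) ∣ P)
    {ζ : K} (hζ : ζ ^ m = 1) : aeval ζ P = 0 := by
  obtain ⟨Q, rfl⟩ := h
  simp [hζ]

theorem X_pow_sub_one_dvd_of_aeval_pow_eq_zero {m : ℕ} [NeZero m] {ξ : K}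
    (hξ : IsPrimitiveRoot ξ m) {P : F[X]} (h : ∀ i < m, aeval (ξ ^ i) P = 0) :
    (X ^ m - 1 : F[X]) ∣ P := by
  have hm := Nat.pos_of_neZero m
  rw [← map_dvd_map' (algebraMap F K), Polynomial.map_sub, Polynomial.map_pow, map_X,
    Polynomial.map_one, X_pow_sub_one_eq_prod hm hξ]
  refine Finset.prod_dvd_of_coprime
    ((pairwise_coprime_X_sub_C Function.injective_id).set_pairwise _) fun ζ hζ => ?_
  obtain ⟨i, hi, rfl⟩ := hξ.eq_pow_of_pow_eq_one ((mem_nthRootsFinset hm 1).1 hζ)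
  rw [dvd_iff_isRoot, IsRoot, eval_map_algebraMap]
  exact h i hi

end RootsOfUnity

end Polynomial

open Polynomial

section QuasiCyclic

variable {F : Type*} [Field F] {l m : ℕ}

noncomputable def oneGenQCEncoder (c : Fin l → F[X]) : F[X] →ₗ[F] (Fin l → ZMod m → F) :=
  LinearMap.pi fun j => (cyclicCoeffs F m).comp (LinearMap.mulRight F (c j))

theorem oneGenQCEncoder_apply (c : Fin l → F[X]) (p : F[X]) (j : Fin l) :
    oneGenQCEncoder c p j = cyclicCoeffs F m (p * c j) := rfl

theorem muQC_neg_one_apply (w : Fin l → ZMod m → F) (j : Fin l) (i : ZMod m) :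
    muQC l m (-1) w j i = w j (-i) := by
  simp [muQC]

variable [NeZero m]

theorem oneGenQC_eq_range (c : Fin l → F[X]) :
    oneGenQC m l c = LinearMap.range (oneGenQCEncoder c) := by
  have hvec : ∀ p : F[X], oneGenQCEncoder c p = fun j => polyToVec m ((p * c j) % (X ^ m - 1)) :=
    fun p => funext₂ fun j i => by
      rw [oneGenQCEncoder_apply, cyclicCoeffs_apply, polyToVec,
        modByMonic_eq_mod _ monic_X_pow_sub_one]
  rw [oneGenQC, ← Submodule.span_eq (LinearMap.range _)]
  congr 1
  ext v
  simp only [Set.mem_ofPred_eq, SetLike.mem_coe, LinearMap.mem_range, hvec, eq_comm]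

theorem oneGenQCEncoder_eq_zero_iff {c : Fin l → F[X]} {p : F[X]} :
    oneGenQCEncoder (m := m) c p = 0 ↔ ∀ j, (X ^ m - 1 : F[X]) ∣ p * c j := by
  simp only [funext_iff, Pi.zero_apply, ← cyclicCoeffs_eq_zero_iff, oneGenQCEncoder_apply]

theorem sum_oneGenQCEncoder_mul_muQC_neg_one (c : Fin l → F[X]) (p q : F[X]) :
    ∑ j, ∑ i, oneGenQCEncoder c p j i * muQC l m (-1) (oneGenQCEncoder c q) j i =
      cyclicCoeffs F m (p * q * ∑ j, c j ^ 2) 0 := by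
  simp only [muQC_neg_one_apply, oneGenQCEncoder_apply, sum_cyclicCoeffs_mul_neg, Finset.mul_sum,
    map_sum, Finset.sum_apply]
  exact Finset.sum_congr rfl fun j _ => by ring_nf

theorem X_pow_sub_one_dvd_of_mem_qcDual {c : Fin l → F[X]} {p : F[X]}
    (hp : oneGenQCEncoder c p ∈ qcDual ((oneGenQC m l c).map (muQC l m (-1)))) :
    (X ^ m - 1 : F[X]) ∣ p * ∑ j, c j ^ 2 := by
  refine X_pow_sub_one_dvd_of_cyclicCoeffs_mul_X_pow fun k => ?_
  have hk : muQC l m (-1) (oneGenQCEncoder c (X ^ k)) ∈ (oneGenQC m l c).map (muQC l m (-1)) :=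
    Submodule.mem_map_of_mem (by rw [oneGenQC_eq_range]; exact LinearMap.mem_range_self _ _)
  rw [← hp _ hk, sum_oneGenQCEncoder_mul_muQC_neg_one, mul_right_comm]

end QuasiCyclic

theorem oneGen_qc_disjoint_supports_mu_neg_one_lcd_general
    {F : Type*} [Field F] {l m : ℕ} [NeZero m]
    {K : Type*} [Field K] [Algebra F K]
    (ξ : K) (hξ : IsPrimitiveRoot ξ m)
    (c : Fin l → Polynomial F)
    (S : Fin l → Set ℕ)
    (hS : ∀ j, S j = {i : ℕ | i < m ∧ Polynomial.aeval (ξ ^ i) (c j) ≠ 0})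
    (hdisj : ∀ j k : Fin l, j ≠ k → S j ∩ S k = ∅) :
    oneGenQC m l c ⊓ qcDual ((oneGenQC m l c).map (muQC l m (-1))) = ⊥ := by
  refine eq_bot_iff.2 fun v hv => ?_
  obtain ⟨hvC, hvD⟩ := Submodule.mem_inf.1 hv
  rw [oneGenQC_eq_range] at hvC
  obtain ⟨p, rfl⟩ := hvC
  have hroot : ∀ i, (ξ ^ i) ^ m = 1 := fun i => by rw [pow_right_comm, hξ.pow_eq_one, one_pow]
  have hsum : ∀ i, aeval (ξ ^ i) p * ∑ j, aeval (ξ ^ i) (c j) ^ 2 = 0 := fun i => by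
    simpa using aeval_eq_zero_of_X_pow_sub_one_dvd (X_pow_sub_one_dvd_of_mem_qcDual hvD) (hroot i)
  rw [Submodule.mem_bot, oneGenQCEncoder_eq_zero_iff]
  refine fun j => X_pow_sub_one_dvd_of_aeval_pow_eq_zero hξ fun i hi => ?_
  rw [map_mul]
  by_cases hcj : aeval (ξ ^ i) (c j) = 0
  · rw [hcj, mul_zero]
  have hothers : ∀ k ≠ j, aeval (ξ ^ i) (c k) = 0 := fun k hk => by
    by_contra hck
    have hmem : i ∈ S j ∩ S k := by rw [hS, hS]; exact ⟨⟨hi, hcj⟩, hi, hck⟩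
    simp [hdisj j k hk.symm] at hmem
  have hsum_i := hsum i
  rw [Finset.sum_eq_single j (fun k _ hk => by rw [hothers k hk, sq, zero_mul])
    (by simp)] at hsum_i
  rw [(mul_eq_zero.1 hsum_i).resolve_right (pow_ne_zero 2 hcj), zero_mul]

/-- Let `gcd(m,q) = 1`, `C = F_q[x]·c(x)` a 1-generator QC code of index `l`, `ξ` a
primitive `m`-th root of unity in an algebraic closure of `F_q`, and
`S_j = {i ∈ Z_m : c_j(ξ^i) ≠ 0}`.  If the `S_j` are pairwise disjoint, then `C` is
`μ_{-1}`-LCD. -/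
theorem oneGen_qc_disjoint_supports_mu_neg_one_lcd
    {F : Type*} [Field F] [Fintype F] {l m : ℕ} [NeZero m]
    (hmq : Nat.Coprime m (Fintype.card F))
    {K : Type*} [Field K] [Algebra F K] [IsAlgClosed K] [Algebra.IsAlgebraic F K]
    (ξ : K) (hξ : IsPrimitiveRoot ξ m)
    (c : Fin l → Polynomial F)
    (S : Fin l → Set ℕ)
    (hS : ∀ j, S j = {i : ℕ | i < m ∧ Polynomial.aeval (ξ ^ i) (c j) ≠ 0})
    (hdisj : ∀ j k : Fin l, j ≠ k → S j ∩ S k = ∅) :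
    oneGenQC m l c ⊓ qcDual ((oneGenQC m l c).map (muQC l m (-1))) = ⊥ :=
  oneGen_qc_disjoint_supports_mu_neg_one_lcd_general ξ hξ c S hS hdisj
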